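/- Let U be a 2×2 unitary matrix with spectral decomposition U = P_U + V_U where P_U projects onto ker(U - I), Q_U = I - P_U, V_U = Q_U U Q_U, and let K_U = -i(I + V_U)(I - V_U)^{-1} Q_U (the inverse of I - V_U taken on ran Q_U). Then for vectors φ, φ̇ ∈ ℂ², the equation i(I + U)φ = (I - U)φ̇ holds if and only if P_U φ = 0 and Q_U φ̇ = -K_U φ. -/
import Mathlib

private lemma matrix_ext_of_mulVec {A B : Matrix (Fin 2) (Fin 2) ℂ}
    (h : ∀ x, A.mulVec x = B.mulVec x) : A = B := by
  ext i j
  have := congrFun (h (Pi.single j 1)) i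
  simpa [Matrix.mulVec_single_one] using this

/-- Let `U` be a 2×2 unitary matrix, `P` the orthogonal projection onto `ker (U - I)`
(a hermitian idempotent whose fixed vectors are exactly the fixed vectors of `U`),
`Q = I - P`, `V = Q U Q`, and `K = -i (I + V) (I - V)⁻¹ Q` where `B` is the inverse of
`I - V` on `ran Q` (so `(I - V) B = Q = B (I - V)` and `B` vanishes on `ran P`).
Then for vectors `φ, φ̇ ∈ ℂ²`, `i (I + U) φ = (I - U) φ̇` holds iff `P φ = 0` and
`Q φ̇ = -K φ`. -/
theorem boundary_condition_projection_form
    (U P B : Matrix (Fin 2) (Fin 2) ℂ)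
    (hU : U ∈ Matrix.unitaryGroup (Fin 2) ℂ)
    (hPidem : P * P = P) (hPsa : P.IsHermitian)
    (hPker : ∀ x : Fin 2 → ℂ, P.mulVec x = x ↔ U.mulVec x = x)
    (hB1 : (1 - (1 - P) * U * (1 - P)) * B = 1 - P)
    (hB2 : B * (1 - (1 - P) * U * (1 - P)) = 1 - P)
    (hB3 : P * B = 0) (hB4 : B * P = 0) :
    ∀ φ φd : Fin 2 → ℂ,
      Complex.I • (1 + U).mulVec φ = (1 - U).mulVec φd ↔
        (P.mulVec φ = 0 ∧
          (1 - P).mulVec φd =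
            -(((-Complex.I) • ((1 + (1 - P) * U * (1 - P)) * B)).mulVec φ)) := by
  have hUP : U * P = P := by
    apply matrix_ext_of_mulVec
    intro x
    rw [← Matrix.mulVec_mulVec]
    exact (hPker (P.mulVec x)).mp (by rw [Matrix.mulVec_mulVec, hPidem])
  have hstar : star U * P = P := by
    apply matrix_ext_of_mulVec
    intro x
    rw [← Matrix.mulVec_mulVec]
    have hfix : U.mulVec (P.mulVec x) = P.mulVec x :=
      (hPker (P.mulVec x)).mp (by rw [Matrix.mulVec_mulVec, hPidem])
    calc (star U).mulVec (P.mulVec x)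
        = (star U).mulVec (U.mulVec (P.mulVec x)) := by rw [hfix]
      _ = ((star U * U).mulVec (P.mulVec x)) := by rw [Matrix.mulVec_mulVec]
      _ = P.mulVec x := by rw [hU.1, Matrix.one_mulVec]
  have hPU : P * U = P := by
    have := congrArg star hstar
    simpa [Matrix.star_eq_conjTranspose, Matrix.conjTranspose_mul, hPsa.eq] using this
  set M := (1 - P) * U * (1 - P) with hM
  have hVM : M = U - P := by
    rw [hM]
    have : (1 - P) * U * (1 - P) = U - P * U - (U * P - P * U * P) := by
      noncomm_ring
    rw [this, hPU, hUP, hPidem]; abel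
  have hcomm : B * M = M * B := by
    have h1 : B - B * M = B - M * B := by
      calc B - B * M = B * (1 - M) := by noncomm_ring
        _ = 1 - P := hB2
        _ = (1 - M) * B := hB1.symm
        _ = B - M * B := by noncomm_ring
    linear_combination (norm := noncomm_ring) -h1
  have hA1 : P * (1 + U) = (2 : ℂ) • P := by
    rw [mul_add, mul_one, hPU, two_smul]
  have hA2 : P * (1 - U) = 0 := by rw [mul_sub, mul_one, hPU, sub_self]
  have hsplit : (1 : Matrix (Fin 2) (Fin 2) ℂ) - U = (1 - M) - P := by
    rw [hVM]; abel
  have hA3 : B * (1 - U) = 1 - P := by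
    rw [hsplit, mul_sub, hB2, hB4, sub_zero]
  have hA4 : B * (1 + U) = (1 + M) * B := by
    have hBU : B * U = B * M := by
      have : U = M + P := by rw [hVM]; abel
      rw [this, mul_add, hB4, add_zero]
    rw [mul_add, mul_one, hBU, hcomm, add_mul, one_mul]
  have hA5 : (1 - U) * ((1 + M) * B) = (1 + U) * (1 - P) := by
    have h6 : (1 - U) * (1 + M) = (1 + U) * (1 - U) := by
      rw [hVM]
      have : (1 - U) * (1 + (U - P)) = 1 - U * U - (P - U * P) := by noncomm_ring
      rw [this, hUP]
      noncomm_ring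
    have h7 : (1 - U) * B = 1 - P := by
      rw [hsplit, sub_mul, hB1, hB3, sub_zero]
    rw [← mul_assoc, h6, mul_assoc, h7]
  intro φ φd
  constructor
  · intro h
    have hP0 : P.mulVec φ = 0 := by
      have h1 := congrArg P.mulVec h
      rw [Matrix.mulVec_smul, Matrix.mulVec_mulVec, Matrix.mulVec_mulVec, hA1, hA2,
        Matrix.zero_mulVec, Matrix.smul_mulVec, smul_smul] at h1
      have h2 : (Complex.I * 2) ≠ 0 := by simp [Complex.I_ne_zero]
      exact (smul_eq_zero.mp h1).resolve_left h2
    refine ⟨hP0, ?_⟩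
    have h1 := congrArg B.mulVec h
    rw [Matrix.mulVec_smul, Matrix.mulVec_mulVec, Matrix.mulVec_mulVec, hA3, hA4] at h1
    rw [Matrix.smul_mulVec, neg_smul, neg_neg]
    exact h1.symm
  · rintro ⟨hP0, hQd⟩
    rw [Matrix.smul_mulVec, neg_smul, neg_neg] at hQd
    have h1 : ((1 : Matrix (Fin 2) (Fin 2) ℂ) - U) * (1 - P) = 1 - U := by
      rw [mul_sub, mul_one, sub_mul, one_mul, hUP]; abel
    calc Complex.I • (1 + U).mulVec φ
        = Complex.I • ((1 + U) * (1 - P)).mulVec φ := by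
          rw [← Matrix.mulVec_mulVec, Matrix.sub_mulVec, Matrix.one_mulVec, hP0, sub_zero]
      _ = ((1 - U)).mulVec (Complex.I • ((1 + M) * B).mulVec φ) := by
          rw [Matrix.mulVec_smul, Matrix.mulVec_mulVec, hA5]
      _ = (1 - U).mulVec ((1 - P).mulVec φd) := by rw [← hQd]
      _ = (1 - U).mulVec φd := by rw [Matrix.mulVec_mulVec, h1]
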